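/- arXiv:0709.1642 — 2 statements merged into one kernel-verified Lean document; each statement's English description precedes it below -/
import Mathlib

section
/- Let α be an irrational real number and let q_n denote the denominator of the n-th convergent of the regular continued fraction expansion of α. Then, as equalities in the extended real numbers, μ(α) = 1 + limsup_{n→∞} (log q_{n+1})/(log q_n) and log θ(α) = limsup_{n→∞} (log q_{n+1})/q_n. -/
open Filter
open scoped ENNReal

/-- `‖x‖`: the distance from `x` to the nearest integer. -/
noncomputable def distNearestInt (x : ℝ) : ℝ := |x - round x|

/-- The irrationality exponent `μ(α) = sup {ν : liminf_q q^{ν−1}‖qα‖ = 0}`,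
the supremum taken in the extended reals. -/
noncomputable def irrationalityExponent (α : ℝ) : EReal :=
  sSup ((fun ν : ℝ => (ν : EReal)) ''
    {ν : ℝ | liminf (fun q : ℕ =>
      (((q : ℝ) ^ (ν - 1) * distNearestInt (q * α) : ℝ) : EReal)) atTop = 0})

/-- The irrationality base `θ(α) = sup {λ ≥ 1 : liminf_q λ^q‖qα‖/q = 0}`,
the supremum taken in the extended reals `[1, ∞]`. -/
noncomputable def irrationalityBase (α : ℝ) : ℝ≥0∞ :=
  sSup (ENNReal.ofReal ''
    {l : ℝ | 1 ≤ l ∧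
      liminf (fun q : ℕ => ((l ^ q * distNearestInt (q * α) / q : ℝ) : EReal)) atTop = 0})

/-- The denominator `q_n` of the `n`-th convergent of the regular continued fraction of `α`. -/
noncomputable def cfDen (α : ℝ) (n : ℕ) : ℝ := (GenContFract.of α).dens n

/-!
Only two properties of the convergent denominators `qₙ` enter: `‖qₙα‖ ≤ 1/qₙ₊₁`, and, by the best
approximation property, `‖qα‖ > 1/(2qₙ₊₁)` for `0 < q < qₙ₊₁`. For an eventually nondecreasing
weight `φ`, the condition `liminf φ(q)‖qα‖ = 0` is therefore squeezed between "`φ(qₙ) = o(qₙ₊₁)`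
along a subsequence" and "`φ(qₙ) < 2qₙ₊₁` infinitely often". Taking logarithms with
`φ(q) = q^(ν-1)` and `φ(q) = λ^q/q` turns both conditions into a comparison of `ν - 1`, resp.
`log λ`, with the limsup of `log qₙ₊₁ / log qₙ`, resp. `log qₙ₊₁ / qₙ`.
-/

/-- `(q, p) = x (a, b) + y (c, d)` with integers `x ≠ 0` and `x * y ≤ 0`, so the errors of the two
terms do not cancel. -/
theorem abs_mul_sub_le_of_det_sq_eq_one {K : Type*} [Field K] [LinearOrder K]
    [IsStrictOrderedRing K] {v : K} {a b c d q p : ℤ} (ha : 0 ≤ a)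
    (hdet : (a * d - b * c) ^ 2 = 1) (hsign : (a * v - b) * (c * v - d) ≤ 0)
    (hq : 0 < q) (hqc : q < c) :
    |a * v - b| ≤ |q * v - p| := by
  obtain ⟨x, y, rfl, rfl⟩ : ∃ x y : ℤ, q = x * a + y * c ∧ p = x * b + y * d :=
    ⟨(a * d - b * c) * (q * d - p * c), (a * d - b * c) * (a * p - b * q),
      by linear_combination (-q) * hdet, by linear_combination (-p) * hdet⟩
  have hxy : x * y ≤ 0 := by
    by_contra! h
    rcases pos_and_pos_or_neg_and_neg_of_mul_pos h with ⟨hx, hy⟩ | ⟨hx, hy⟩ <;> nlinarith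
  have hx : x ≠ 0 := by
    rintro rfl
    rcases le_or_gt y 0 with hy | hy <;> nlinarith
  have hsum : ((x * a + y * c : ℤ) : K) * v - (x * b + y * d : ℤ) =
      x * (a * v - b) + y * (c * v - d) := by
    push_cast; ring
  rw [hsum]
  calc |a * v - b| ≤ |(x : K)| * |a * v - b| :=
        le_mul_of_one_le_left (abs_nonneg _) (by exact_mod_cast Int.one_le_abs hx)
    _ = |x * (a * v - b)| := (abs_mul _ _).symm
    _ ≤ |x * (a * v - b) + y * (c * v - d)| := by
      refine sq_le_sq.mp ?_
      have : (0 : K) ≤ (x * (a * v - b)) * (y * (c * v - d)) := by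
        have hxy' : (x : K) * y ≤ 0 := by exact_mod_cast hxy
        nlinarith [mul_nonneg_of_nonpos_of_nonpos hxy' hsign]
      nlinarith

namespace GenContFract

variable {K : Type*} [Field K] [LinearOrder K] [FloorRing K]

theorem exists_int_contsAux_eq (v : K) (n : ℕ) :
    ∃ a b : ℤ, (GenContFract.of v).contsAux n = ⟨a, b⟩ := by
  induction n using Nat.twoStepInduction with
  | zero => exact ⟨1, 0, by simp [zeroth_contAux_eq_one_zero]⟩
  | one => exact ⟨⌊v⌋, 1, by simp [first_contAux_eq_h_one, of_h_eq_floor]⟩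
  | more n ih₀ ih₁ =>
    obtain ⟨a₀, b₀, h₀⟩ := ih₀
    obtain ⟨a₁, b₁, h₁⟩ := ih₁
    cases hs : (GenContFract.of v).s.get? n with
    | none => exact ⟨a₁, b₁, (contsAux_stable_step_of_terminated hs).trans h₁⟩
    | some gp =>
      obtain ⟨z, hz⟩ := exists_int_eq_of_partDen (partDen_eq_s_b hs)
      refine ⟨z * a₁ + a₀, z * b₁ + b₀, ?_⟩
      rw [contsAux_recurrence hs h₀ h₁, of_partNum_eq_one (partNum_eq_s_a hs), hz]
      push_cast
      simp

theorem exists_int_nums_dens_eq (v : K) (n : ℕ) :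
    ∃ p q : ℤ, (GenContFract.of v).nums n = p ∧ (GenContFract.of v).dens n = q := by
  obtain ⟨p, q, h⟩ := exists_int_contsAux_eq v (n + 1)
  exact ⟨p, q, by rw [num_eq_conts_a, nth_cont_eq_succ_nth_contAux, h],
    by rw [den_eq_conts_b, nth_cont_eq_succ_nth_contAux, h]⟩

variable [IsStrictOrderedRing K]

theorem one_le_dens (v : K) (n : ℕ) : 1 ≤ (GenContFract.of v).dens n := by
  induction n with
  | zero => rw [zeroth_den_eq_one]
  | succ n ih => exact ih.trans of_den_mono

theorem dens_pos (v : K) (n : ℕ) : 0 < (GenContFract.of v).dens n :=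
  one_pos.trans_le (one_le_dens v n)

theorem exists_nat_dens_eq (v : K) (n : ℕ) : ∃ m : ℕ, (GenContFract.of v).dens n = m := by
  obtain ⟨-, q, -, hq⟩ := exists_int_nums_dens_eq v n
  have hq₀ : 0 ≤ q := by exact_mod_cast hq ▸ (dens_pos v n).le
  exact ⟨q.toNat, by rw [hq, ← Int.cast_natCast, Int.toNat_of_nonneg hq₀]⟩

/-- Here `r = qₙ / frₙ + qₙ₋₁`, where `frₙ` is the `n`-th fractional part of the expansion. -/
theorem exists_dens_mul_sub_nums_eq {v : K} {n : ℕ} (hn : ¬(GenContFract.of v).TerminatedAt n) :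
    ∃ r, (GenContFract.of v).dens (n + 1) ≤ r ∧
      r < (GenContFract.of v).dens (n + 1) + (GenContFract.of v).dens n ∧
      (GenContFract.of v).dens n * v - (GenContFract.of v).nums n = (-1) ^ n / r := by
  obtain ⟨gp, hs⟩ := Option.ne_none_iff_exists'.mp hn
  obtain ⟨_, hstream', -⟩ := IntFractPair.exists_succ_get?_stream_of_gcf_of_get?_eq_some hs
  obtain ⟨ifp, hstream, hfr, rfl⟩ := IntFractPair.succ_nth_stream_eq_some_iff.mp hstream'
  set B := ((GenContFract.of v).contsAux (n + 1)).b
  set pB := ((GenContFract.of v).contsAux n).b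
  have hB : (GenContFract.of v).dens n = B := by
    rw [den_eq_conts_b, nth_cont_eq_succ_nth_contAux]
  have hB' : (GenContFract.of v).dens (n + 1) = ⌊ifp.fr⁻¹⌋ * B + pB := by
    rw [den_eq_conts_b, nth_cont_eq_succ_nth_contAux, contsAux_recurrence
      (get?_of_eq_some_of_get?_intFractPair_stream_fr_ne_zero hstream hfr) rfl rfl]
    simp [IntFractPair.of, B, pB]
  have hBpos : 0 < B := hB ▸ dens_pos v n
  have hpB : 0 ≤ pB := zero_le_of_contsAux_b
  have hfrpos : 0 < ifp.fr := (IntFractPair.nth_stream_fr_nonneg hstream).lt_of_ne' hfr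
  have hfloor := Int.floor_le ifp.fr⁻¹
  have hfloor' := Int.lt_floor_add_one ifp.fr⁻¹
  have herr : v - (GenContFract.of v).nums n / B = (-1) ^ n / (B * (ifp.fr⁻¹ * B + pB)) := by
    simpa [hfr, conv_eq_num_div_den, hB] using sub_convs_eq hstream
  refine ⟨ifp.fr⁻¹ * B + pB, by rw [hB']; nlinarith, by rw [hB', hB]; nlinarith, ?_⟩
  have : 0 < ifp.fr⁻¹ * B + pB := by positivity
  rw [hB, show B * v - _ = B * (v - (GenContFract.of v).nums n / B) by field_simp, herr]
  field_simp

theorem abs_dens_mul_sub_nums_le {v : K} {n : ℕ} (hn : ¬(GenContFract.of v).TerminatedAt n) :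
    |(GenContFract.of v).dens n * v - (GenContFract.of v).nums n| ≤
      1 / (GenContFract.of v).dens (n + 1) := by
  obtain ⟨r, hr, -, herr⟩ := exists_dens_mul_sub_nums_eq hn
  rw [herr, abs_div, abs_neg_one_pow, abs_of_pos ((dens_pos v _).trans_le hr)]
  exact one_div_le_one_div_of_le (dens_pos v _) hr

theorem lt_abs_mul_sub {v : K} {n : ℕ} (hn : ¬(GenContFract.of v).TerminatedAt (n + 1))
    {q p : ℤ} (hq : 0 < q) (hqn : (q : K) < (GenContFract.of v).dens (n + 1)) :
    1 / (2 * (GenContFract.of v).dens (n + 1)) < |q * v - p| := by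
  have hn' : ¬(GenContFract.of v).TerminatedAt n := mt (terminated_stable n.le_succ) hn
  obtain ⟨r, hr, hr', herr⟩ := exists_dens_mul_sub_nums_eq hn'
  obtain ⟨r₁, hr₁, -, herr₁⟩ := exists_dens_mul_sub_nums_eq hn
  have hr₀ : 0 < r := (dens_pos v _).trans_le hr
  have hr₁₀ : 0 < r₁ := (dens_pos v _).trans_le hr₁
  obtain ⟨p₀, q₀, hp₀, hq₀⟩ := exists_int_nums_dens_eq v n
  obtain ⟨p₁, q₁, hp₁, hq₁⟩ := exists_int_nums_dens_eq v (n + 1)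
  have hdet : (q₀ * p₁ - p₀ * q₁) ^ 2 = 1 := by
    have h : (GenContFract.of v).nums n * (GenContFract.of v).dens (n + 1) -
        (GenContFract.of v).dens n * (GenContFract.of v).nums (n + 1) = (-1) ^ (n + 1) :=
      SimpContFract.determinant (s := SimpContFract.of v) hn'
    rw [hp₀, hq₀, hp₁, hq₁] at h
    have h' : p₀ * q₁ - q₀ * p₁ = (-1) ^ (n + 1) := by exact_mod_cast h
    rw [← neg_sub, h', neg_sq, ← pow_mul, pow_mul', neg_one_sq, one_pow]
  have hsign : (q₀ * v - p₀) * (q₁ * v - p₁) ≤ 0 := by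
    rw [← hp₀, ← hq₀, ← hp₁, ← hq₁, herr, herr₁, div_mul_div_comm, ← pow_add,
      Odd.neg_one_pow ⟨n, by ring⟩]
    exact div_nonpos_of_nonpos_of_nonneg (by norm_num) (by positivity)
  have hbest := abs_mul_sub_le_of_det_sq_eq_one (p := p)
    (by exact_mod_cast hq₀ ▸ (dens_pos v n).le) hdet hsign hq (by exact_mod_cast hq₁ ▸ hqn)
  have hmono : (GenContFract.of v).dens n ≤ (GenContFract.of v).dens (n + 1) := of_den_mono
  calc 1 / (2 * (GenContFract.of v).dens (n + 1)) < 1 / r :=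
        one_div_lt_one_div_of_lt hr₀ (by linarith)
    _ = |q₀ * v - p₀| := by rw [← hp₀, ← hq₀, herr, abs_div, abs_neg_one_pow, abs_of_pos hr₀]
    _ ≤ |q * v - p| := hbest

theorem not_terminatedAt_of_irrational {α : ℝ} (hα : Irrational α) (n : ℕ) :
    ¬(GenContFract.of α).TerminatedAt n := fun h ↦ by
  obtain ⟨q, hq⟩ := (terminates_iff_rat α).mp ⟨n, h⟩
  exact hα ⟨q, hq.symm⟩

end GenContFract

structure IsApproxDenominators (α : ℝ) (Q : ℕ → ℕ) : Prop where
  pos (n : ℕ) : 0 < Q n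
  mono : Monotone Q
  tendsto_atTop : Tendsto Q atTop atTop
  distNearestInt_le (n : ℕ) : distNearestInt (Q n * α) ≤ 1 / Q (n + 1)
  lt_distNearestInt (n q : ℕ) (hq : 0 < q) (hqQ : q < Q (n + 1)) :
    1 / (2 * Q (n + 1)) < distNearestInt (q * α)

open GenContFract in
theorem Irrational.exists_isApproxDenominators {α : ℝ} (hα : Irrational α) :
    ∃ Q, IsApproxDenominators α Q ∧ ∀ n, (Q n : ℝ) = cfDen α n := by
  choose Q hQ using exists_nat_dens_eq α
  have hα' := not_terminatedAt_of_irrational hα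
  refine ⟨Q, ⟨fun n ↦ ?_, ?_, ?_, fun n ↦ ?_, fun n q hq hqQ ↦ ?_⟩, fun n ↦ (hQ n).symm⟩
  · exact_mod_cast hQ n ▸ dens_pos α n
  · refine monotone_nat_of_le_succ fun n ↦ ?_
    have := of_den_mono (v := α) (n := n)
    rw [hQ, hQ] at this
    exact_mod_cast this
  · refine tendsto_atTop_mono' atTop ?_ tendsto_id
    filter_upwards [eventually_ge_atTop 5] with n hn
    have hfib : (n : ℝ) ≤ Nat.fib (n + 1) := by
      exact_mod_cast (Nat.le_fib_self hn).trans (Nat.fib_mono n.le_succ)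
    exact_mod_cast hfib.trans (hQ n ▸ succ_nth_fib_le_of_nth_den (Or.inr (hα' _)))
  · obtain ⟨p, -, hp, -⟩ := exists_int_nums_dens_eq α n
    calc distNearestInt (Q n * α) ≤ |Q n * α - p| := round_le _ _
      _ ≤ 1 / Q (n + 1) := hQ n ▸ hQ (n + 1) ▸ hp ▸ abs_dens_mul_sub_nums_le (hα' n)
  · have := lt_abs_mul_sub (hα' (n + 1)) (p := round (q * α)) (q := q) (by exact_mod_cast hq)
      (by rw [hQ]; exact_mod_cast hqQ)
    rw [hQ] at this
    exact_mod_cast this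

namespace EReal

variable {ι : Type*} {l : Filter ι} {u : ι → ℝ}

theorem liminf_coe_eq_zero_iff (hu : ∀ i, 0 ≤ u i) :
    liminf (fun i ↦ (u i : EReal)) l = 0 ↔ ∀ ε > 0, ∃ᶠ i in l, u i < ε := by
  refine ⟨fun h ε hε ↦ ?_, fun h ↦ le_antisymm ?_ ?_⟩
  · have : liminf (fun i ↦ (u i : EReal)) l < ε := by rw [h]; exact_mod_cast hε
    exact (frequently_lt_of_liminf_lt (by isBoundedDefault) this).mono fun i hi ↦ by
      exact_mod_cast hi
  · refine le_of_forall_gt fun c hc ↦ ?_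
    obtain ⟨ε, hε, hεc⟩ := exists_between_coe_real hc
    refine lt_of_le_of_lt (liminf_le_of_frequently_le' ?_) hεc
    exact (h ε (by exact_mod_cast hε)).mono fun i hi ↦ by exact_mod_cast hi.le
  · exact le_liminf_of_le (by isBoundedDefault) (.of_forall fun i ↦ by exact_mod_cast hu i)

theorem le_limsup_coe_of_frequently_le {a : EReal}
    (h : ∀ c : ℝ, (c : EReal) < a → ∃ᶠ i in l, c ≤ u i) :
    a ≤ limsup (fun i ↦ (u i : EReal)) l := by
  refine le_of_forall_lt fun b hb ↦ ?_
  obtain ⟨c, hbc, hca⟩ := exists_between_coe_real hb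
  exact hbc.trans_le (le_limsup_of_frequently_le ((h c hca).mono fun i hi ↦ by exact_mod_cast hi)
    (by isBoundedDefault))

theorem sSup_image_coe_eq {S : Set ℝ} {x : EReal}
    (hlt : ∀ ν : ℝ, (ν : EReal) < x → ∃ ν' ∈ S, ν ≤ ν') (hle : ∀ ν ∈ S, (ν : EReal) ≤ x) :
    sSup ((↑) '' S) = x := by
  refine le_antisymm (sSup_le (Set.forall_mem_image.2 hle)) (le_of_forall_lt fun b hb ↦ ?_)
  obtain ⟨c, hbc, hcx⟩ := exists_between_coe_real hb
  obtain ⟨ν, hν, hcν⟩ := hlt c hcx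
  exact hbc.trans_le ((by exact_mod_cast hcν : (c : EReal) ≤ ν).trans (le_sSup ⟨ν, hν, rfl⟩))

end EReal

theorem Monotone.exists_le_lt_succ {β : Type*} [LinearOrder β] [NoMaxOrder β] {Q : ℕ → β}
    (hmono : Monotone Q) (htend : Tendsto Q atTop atTop) {M : ℕ} {q : β} (hq : Q M ≤ q) :
    ∃ n, M ≤ n ∧ Q n ≤ q ∧ q < Q (n + 1) := by
  classical
  have hex : ∃ m, q < Q m := (htend.eventually_gt_atTop q).exists
  obtain ⟨n, hn⟩ : ∃ n, Nat.find hex = n + 1 :=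
    Nat.exists_eq_add_one_of_ne_zero fun h ↦ (Nat.find_spec hex).not_ge
      (h ▸ (hmono (Nat.zero_le M)).trans hq)
  refine ⟨n, ?_, not_lt.1 (Nat.find_min hex (by omega)), hn ▸ Nat.find_spec hex⟩
  by_contra! hnM
  exact (hn ▸ Nat.find_spec hex).not_ge ((hmono hnM).trans hq)

theorem monotoneOn_pow_div_natCast {l : ℝ} (hl : 1 < l) {N : ℕ} (hN : (l - 1)⁻¹ ≤ N) :
    MonotoneOn (fun q : ℕ ↦ l ^ q / q) (Set.Ici N) := by
  refine monotoneOn_nat_Ici_of_le_succ fun q hq ↦ ?_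
  have hl' : 0 < l - 1 := sub_pos.2 hl
  have hq' : 1 ≤ (l - 1) * q := by
    have := mul_le_mul_of_nonneg_left (hN.trans (Nat.cast_le.2 hq)) hl'.le
    rwa [mul_inv_cancel₀ hl'.ne'] at this
  have hq0 : (0 : ℝ) < q := pos_of_mul_pos_right (one_pos.trans_le hq') hl'.le
  rw [div_le_div_iff₀ hq0 (by positivity), pow_succ]
  push_cast
  nlinarith [pow_pos (one_pos.trans hl) q]

namespace IsApproxDenominators

variable {α : ℝ} {Q : ℕ → ℕ}

theorem tendsto_cast_atTop (hQ : IsApproxDenominators α Q) :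
    Tendsto (fun n ↦ (Q n : ℝ)) atTop atTop :=
  tendsto_natCast_atTop_atTop.comp hQ.tendsto_atTop

theorem liminf_mul_distNearestInt_eq_zero (hQ : IsApproxDenominators α Q) {φ : ℕ → ℝ}
    (hφ : ∀ q, 0 ≤ φ q) (h : ∀ ε > 0, ∃ᶠ n in atTop, φ (Q n) < ε * Q (n + 1)) :
    liminf (fun q : ℕ ↦ ((φ q * distNearestInt (q * α) : ℝ) : EReal)) atTop = 0 := by
  refine (EReal.liminf_coe_eq_zero_iff fun q ↦ mul_nonneg (hφ q) (abs_nonneg _)).2 fun ε hε ↦ ?_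
  refine hQ.tendsto_atTop.frequently ((h ε hε).mono fun n hn ↦ ?_)
  have hQ₁ : (0 : ℝ) < Q (n + 1) := by exact_mod_cast hQ.pos (n + 1)
  calc φ (Q n) * distNearestInt (Q n * α) ≤ φ (Q n) * (1 / Q (n + 1)) :=
        mul_le_mul_of_nonneg_left (hQ.distNearestInt_le n) (hφ _)
    _ < ε := by rwa [mul_one_div, div_lt_iff₀ hQ₁]

theorem frequently_lt_of_liminf_mul_distNearestInt_eq_zero (hQ : IsApproxDenominators α Q)
    {φ : ℕ → ℝ} {N : ℕ} (hφ : ∀ q, 0 ≤ φ q) (hφN : MonotoneOn φ (Set.Ici N))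
    (h : liminf (fun q : ℕ ↦ ((φ q * distNearestInt (q * α) : ℝ) : EReal)) atTop = 0) :
    ∃ᶠ n in atTop, φ (Q n) < 2 * Q (n + 1) := by
  rw [frequently_atTop]
  intro M
  obtain ⟨M', hM'⟩ := eventually_atTop.1 (hQ.tendsto_atTop.eventually_ge_atTop N)
  have hsmall := (EReal.liminf_coe_eq_zero_iff fun q ↦ mul_nonneg (hφ q) (abs_nonneg _)).1 h 1
    one_pos
  obtain ⟨q, hqM, hq⟩ := frequently_atTop.1 hsmall (Q (max M M'))
  obtain ⟨n, hn, hQn, hqQ⟩ := hQ.mono.exists_le_lt_succ hQ.tendsto_atTop hqM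
  have hNQ : N ≤ Q n := hM' n (le_of_max_le_right hn)
  have hQ₁ : (0 : ℝ) < Q (n + 1) := by exact_mod_cast hQ.pos (n + 1)
  have hlow := hQ.lt_distNearestInt n q ((hQ.pos n).trans_le hQn) hqQ
  refine ⟨n, le_of_max_le_left hn, (hφN hNQ (hNQ.trans hQn) hQn).trans_lt ?_⟩
  have : φ q * (1 / (2 * Q (n + 1))) < 1 :=
    (mul_le_mul_of_nonneg_left hlow.le (hφ q)).trans_lt hq
  rwa [mul_one_div, div_lt_one (by positivity)] at this

theorem liminf_rpow_mul_distNearestInt_eq_zero (hQ : IsApproxDenominators α Q) {ν : ℝ}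
    (hν : ((ν - 1 : ℝ) : EReal) <
      limsup (fun n ↦ ((Real.log (Q (n + 1)) / Real.log (Q n) : ℝ) : EReal)) atTop) :
    liminf (fun q : ℕ ↦ (((q : ℝ) ^ (ν - 1) * distNearestInt (q * α) : ℝ) : EReal)) atTop = 0 := by
  obtain ⟨c, hνc, hcL⟩ := EReal.exists_between_coe_real hν
  replace hνc : ν - 1 - c < 0 := sub_neg.2 (by exact_mod_cast hνc)
  refine hQ.liminf_mul_distNearestInt_eq_zero (fun q ↦ by positivity) fun ε hε ↦ ?_
  have hfreq := frequently_lt_of_lt_limsup (by isBoundedDefault) hcL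
  have hev : ∀ᶠ n in atTop, 1 < (Q n : ℝ) ∧ (Q n : ℝ) ^ (ν - 1 - c) < ε :=
    (hQ.tendsto_cast_atTop.eventually_gt_atTop 1).and
      ((tendsto_rpow_neg_atTop (neg_pos.2 hνc)).comp hQ.tendsto_cast_atTop |>.eventually
        (gt_mem_nhds hε) |>.mono fun n hn ↦ by simpa using hn)
  refine (hfreq.and_eventually hev).mono fun n ⟨hcn, hQn, hεn⟩ ↦ ?_
  have hQ₀ : (0 : ℝ) < Q n := one_pos.trans hQn
  have hc : (Q n : ℝ) ^ c < Q (n + 1) := by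
    have : c * Real.log (Q n) < Real.log (Q (n + 1)) :=
      (lt_div_iff₀ (Real.log_pos hQn)).1 (by exact_mod_cast hcn)
    rwa [← Real.log_rpow hQ₀, Real.log_lt_log_iff (by positivity) (by exact_mod_cast hQ.pos _)]
      at this
  calc (Q n : ℝ) ^ (ν - 1) = (Q n : ℝ) ^ (ν - 1 - c) * (Q n : ℝ) ^ c := by
        rw [← Real.rpow_add hQ₀, sub_add_cancel]
    _ < ε * Q (n + 1) := mul_lt_mul'' hεn hc (by positivity) (by positivity)

theorem le_limsup_log_div_log_of_liminf_eq_zero (hQ : IsApproxDenominators α Q) {ν : ℝ}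
    (hν : 1 ≤ ν)
    (h : liminf (fun q : ℕ ↦ (((q : ℝ) ^ (ν - 1) * distNearestInt (q * α) : ℝ) : EReal))
      atTop = 0) :
    ((ν - 1 : ℝ) : EReal) ≤
      limsup (fun n ↦ ((Real.log (Q (n + 1)) / Real.log (Q n) : ℝ) : EReal)) atTop := by
  have hfreq := hQ.frequently_lt_of_liminf_mul_distNearestInt_eq_zero (N := 0)
    (fun q ↦ by positivity)
    (fun a _ b _ hab ↦ Real.rpow_le_rpow (Nat.cast_nonneg a) (Nat.cast_le.2 hab) (by linarith)) h
  refine EReal.le_limsup_coe_of_frequently_le fun c hc ↦ ?_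
  replace hc : 0 < ν - 1 - c := sub_pos.2 (by exact_mod_cast hc)
  have hev : ∀ᶠ n in atTop, 1 < (Q n : ℝ) ∧ Real.log 2 ≤ (ν - 1 - c) * Real.log (Q n) :=
    (hQ.tendsto_cast_atTop.eventually_gt_atTop 1).and
      (((Real.tendsto_log_atTop.comp hQ.tendsto_cast_atTop).const_mul_atTop hc).eventually_ge_atTop
        _)
  refine (hfreq.and_eventually hev).mono fun n ⟨hlt, hQn, hlog2⟩ ↦ ?_
  have hQ₀ : (0 : ℝ) < Q n := one_pos.trans hQn
  have hlog : (ν - 1) * Real.log (Q n) < Real.log 2 + Real.log (Q (n + 1)) := by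
    have := Real.log_lt_log (by positivity) hlt
    rwa [Real.log_rpow hQ₀, Real.log_mul two_ne_zero (by exact_mod_cast (hQ.pos _).ne')] at this
  rw [le_div_iff₀ (Real.log_pos hQn)]
  linarith

theorem liminf_exp_pow_mul_distNearestInt_div_eq_zero (hQ : IsApproxDenominators α Q) {c : ℝ}
    (h : ∃ᶠ n in atTop, c * Q n ≤ Real.log (Q (n + 1))) :
    liminf (fun q : ℕ ↦ ((Real.exp c ^ q * distNearestInt (q * α) / q : ℝ) : EReal)) atTop = 0 := by
  simp_rw [mul_div_right_comm]
  refine hQ.liminf_mul_distNearestInt_eq_zero (fun q ↦ by positivity) fun ε hε ↦ ?_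
  refine (h.and_eventually (hQ.tendsto_cast_atTop.eventually_gt_atTop ε⁻¹)).mono
    fun n ⟨hn, hεn⟩ ↦ ?_
  have hQ₀ : (0 : ℝ) < Q n := by exact_mod_cast hQ.pos n
  have hQ₁ : (0 : ℝ) < Q (n + 1) := by exact_mod_cast hQ.pos (n + 1)
  have hexp : Real.exp c ^ Q n ≤ Q (n + 1) := by
    rw [← Real.exp_nat_mul, ← Real.exp_log hQ₁, mul_comm]
    exact Real.exp_le_exp.2 hn
  calc Real.exp c ^ Q n / Q n ≤ Q (n + 1) / Q n := div_le_div_of_nonneg_right hexp hQ₀.le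
    _ < ε * Q (n + 1) := by
      rw [div_lt_iff₀ hQ₀, mul_assoc, mul_comm (Q (n + 1) : ℝ), ← mul_assoc]
      exact lt_mul_left hQ₁ (by rwa [inv_lt_iff_one_lt_mul₀ hε, mul_comm] at hεn)

theorem le_limsup_log_div_of_liminf_eq_zero (hQ : IsApproxDenominators α Q) {l : ℝ} (hl : 1 < l)
    (h : liminf (fun q : ℕ ↦ ((l ^ q * distNearestInt (q * α) / q : ℝ) : EReal)) atTop = 0) :
    (Real.log l : EReal) ≤ limsup (fun n ↦ ((Real.log (Q (n + 1)) / Q n : ℝ) : EReal)) atTop := by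
  simp_rw [mul_div_right_comm] at h
  obtain ⟨N, hN⟩ := exists_nat_gt (l - 1)⁻¹
  have hfreq := hQ.frequently_lt_of_liminf_mul_distNearestInt_eq_zero
    (fun q ↦ by positivity) (monotoneOn_pow_div_natCast hl hN.le) h
  refine EReal.le_limsup_coe_of_frequently_le fun c hc ↦ ?_
  replace hc : 0 < Real.log l - c := sub_pos.2 (by exact_mod_cast hc)
  have hev : ∀ᶠ n in atTop, 0 < (Q n : ℝ) ∧
      Real.log 2 + Real.log (Q n) ≤ (Real.log l - c) * Q n := by
    have := ((Asymptotics.isLittleO_const_id_atTop (Real.log 2)).add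
      Real.isLittleO_log_id_atTop).bound hc
    refine (hQ.tendsto_cast_atTop.eventually (this.and (eventually_gt_atTop 0))).mono
      fun n ⟨hn, hpos⟩ ↦ ⟨hpos, ?_⟩
    simpa [abs_of_pos hpos] using (le_abs_self _).trans hn
  refine (hfreq.and_eventually hev).mono fun n ⟨hlt, hQ₀, hb⟩ ↦ ?_
  have hlog : Q n * Real.log l - Real.log (Q n) < Real.log 2 + Real.log (Q (n + 1)) := by
    have := Real.log_lt_log (by positivity) hlt
    rwa [Real.log_div (by positivity) hQ₀.ne', Real.log_pow,
      Real.log_mul two_ne_zero (by exact_mod_cast (hQ.pos _).ne')] at this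
  rw [le_div_iff₀ hQ₀]
  linarith

theorem irrationalityExponent_eq (hQ : IsApproxDenominators α Q) : irrationalityExponent α =
    1 + limsup (fun n ↦ ((Real.log (Q (n + 1)) / Real.log (Q n) : ℝ) : EReal)) atTop := by
  have hL : 0 ≤ limsup (fun n ↦ ((Real.log (Q (n + 1)) / Real.log (Q n) : ℝ) : EReal)) atTop :=
    le_limsup_of_frequently_le (.of_forall fun n ↦ by
      exact_mod_cast div_nonneg (Real.log_natCast_nonneg _) (Real.log_natCast_nonneg _))
      (by isBoundedDefault)
  refine EReal.sSup_image_coe_eq (fun ν hν ↦ ⟨ν, ?_, le_rfl⟩) fun ν hν ↦ ?_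
  · refine hQ.liminf_rpow_mul_distNearestInt_eq_zero ?_
    rw [EReal.coe_sub, EReal.coe_one]
    exact EReal.sub_lt_of_lt_add' hν
  rcases le_or_gt 1 ν with hν1 | hν1
  · calc (ν : EReal) = 1 + ((ν - 1 : ℝ) : EReal) := by
          rw [← EReal.coe_one, ← EReal.coe_add, add_sub_cancel]
      _ ≤ _ := add_le_add_right (hQ.le_limsup_log_div_log_of_liminf_eq_zero hν1 hν) 1
  · calc (ν : EReal) ≤ 1 := by exact_mod_cast hν1.le
      _ ≤ _ := le_add_of_nonneg_right hL

theorem log_irrationalityBase_eq (hQ : IsApproxDenominators α Q) :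
    ENNReal.log (irrationalityBase α) =
      limsup (fun n ↦ ((Real.log (Q (n + 1)) / Q n : ℝ) : EReal)) atTop := by
  set T := {l : ℝ | 1 ≤ l ∧
    liminf (fun q : ℕ => ((l ^ q * distNearestInt (q * α) / q : ℝ) : EReal)) atTop = 0}
  have hlog : ENNReal.log (irrationalityBase α) = sSup ((↑) '' (Real.log '' T)) := by
    rw [irrationalityBase, ← ENNReal.logOrderIso_apply, OrderIso.map_sSup, ← sSup_image,
      Set.image_image, Set.image_image]
    exact congrArg sSup (Set.image_congr fun l hl ↦
      ENNReal.log_ofReal_of_pos (one_pos.trans_le hl.1))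
  have hS : 0 ≤ limsup (fun n ↦ ((Real.log (Q (n + 1)) / Q n : ℝ) : EReal)) atTop :=
    le_limsup_of_frequently_le (.of_forall fun n ↦ by
      exact_mod_cast div_nonneg (Real.log_natCast_nonneg _) (Nat.cast_nonneg _))
      (by isBoundedDefault)
  rw [hlog]
  refine EReal.sSup_image_coe_eq (fun c hc ↦ ?_) ?_
  · have hfreq : ∃ᶠ n in atTop, max c 0 * Q n ≤ Real.log (Q (n + 1)) :=
      (frequently_lt_of_lt_limsup (by isBoundedDefault) hc).mono fun n hn ↦ by
        rw [max_mul_of_nonneg _ _ (Nat.cast_nonneg _), zero_mul]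
        exact max_le ((lt_div_iff₀ (by exact_mod_cast hQ.pos n)).1 (by exact_mod_cast hn)).le
          (Real.log_natCast_nonneg _)
    exact ⟨max c 0, ⟨Real.exp (max c 0), ⟨Real.one_le_exp (le_max_right _ _),
      hQ.liminf_exp_pow_mul_distNearestInt_div_eq_zero hfreq⟩, Real.log_exp _⟩, le_max_left _ _⟩
  · rintro _ ⟨l, ⟨hl1, hl⟩, rfl⟩
    rcases hl1.eq_or_lt with rfl | hl1
    · simpa using hS
    · exact hQ.le_limsup_log_div_of_liminf_eq_zero hl1 hl

end IsApproxDenominators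

/-- For irrational `α` with convergent denominators `q_n`:
`μ(α) = 1 + limsup (log q_{n+1})/(log q_n)` and `log θ(α) = limsup (log q_{n+1})/q_n`,
as equalities in the extended reals. -/
theorem irrationality_measures_via_denominators (α : ℝ) (hα : Irrational α) :
    irrationalityExponent α =
      1 + limsup (fun n : ℕ =>
        ((Real.log (cfDen α (n + 1)) / Real.log (cfDen α n) : ℝ) : EReal)) atTop ∧
    ENNReal.log (irrationalityBase α) =
      limsup (fun n : ℕ => ((Real.log (cfDen α (n + 1)) / cfDen α n : ℝ) : EReal)) atTop := by
  obtain ⟨Q, hQ, hQα⟩ := hα.exists_isApproxDenominators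
  simp only [← hQα]
  exact ⟨hQ.irrationalityExponent_eq, hQ.log_irrationalityBase_eq⟩
end

section
/- Let α₀ > 0 be irrational. If the irrationality base satisfies θ(α₀) < Δ(α₀) (as extended reals), then Δ is differentiable at α₀ with Δ′(α₀) = 0. -/
open Filter
open scoped ENNReal

/-- The digit sequence `u_α`: with `b = ⌈α⌉`, `u_α n = (b−1) + ⌈(α−b+1)(n+1)⌉ − ⌈(α−b+1)n⌉`,
the upper mechanical word of slope `α − b + 1` written over the alphabet `{b−1, b}`. -/
noncomputable def upperWord (α : ℝ) (n : ℕ) : ℤ :=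
  (⌈α⌉ - 1) + (⌈(α - ⌈α⌉ + 1) * ((n : ℝ) + 1)⌉ - ⌈(α - ⌈α⌉ + 1) * (n : ℝ)⌉)

/-- `Δ` is the devil's staircase function: `Δ 0 = 1` and, for each `α > 0`, `Δ α` is the
unique real `β > 1` satisfying `∑_{n=0}^∞ u_α(n)·β^{−(n+1)} = 1`. -/
def IsDevilStaircase (Δ : ℝ → ℝ) : Prop :=
  Δ 0 = 1 ∧ ∀ α : ℝ, 0 < α →
    (1 < Δ α ∧ ∑' n : ℕ, (upperWord α n : ℝ) / (Δ α) ^ (n + 1) = 1) ∧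
    ∀ β : ℝ, 1 < β → (∑' n : ℕ, (upperWord α n : ℝ) / β ^ (n + 1) = 1) → β = Δ α

/-!
Write `x = 1/β`. Summation by parts turns the equation defining `Δ α` into
`(1 - x) ∑ ⌈αN⌉ x^N = 1`, whose left side increases in `x` at rate at least `1`. If
`⌈aN⌉ = ⌈α₀N⌉` for all `N < M`, the two series differ only from `x^M` on, so the roots satisfy
`|x(a) - x(α₀)| = O(M X^M)` for any common bound `X < 1` of the roots. For `θ(α₀) < λ < Δ(α₀)`
we have `‖qα₀‖ ≫ q λ^(-q)`, so this agreement holds once `|a - α₀| ≲ λ^(-M)`, and then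
`|x(a) - x(α₀)| = O(|a - α₀| M (Xλ)^M) = o(|a - α₀|)` provided `Xλ < 1`. A first pass with a
crude `X` shows that `x` is continuous at `α₀`, which supplies such an `X` because
`x(α₀) = 1/Δ(α₀) < 1/λ`.
-/

open Topology

lemma hasSum_add_one_mul_geometric {r : ℝ} (hr : |r| < 1) :
    HasSum (fun n : ℕ => ((n : ℝ) + 1) * r ^ n) ((1 - r)⁻¹ ^ 2) := by
  simpa [Ring.inverse_eq_inv'] using
    hasSum_choose_mul_geometric_of_norm_lt_one' 1 (show ‖r‖ < 1 from hr)

lemma abs_ceil_sub_ceil_le (a b : ℝ) : |(⌈a⌉ : ℝ) - ⌈b⌉| ≤ |a - b| + 1 := by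
  rw [abs_le]
  constructor
  · linarith [Int.le_ceil a, Int.ceil_lt_add_one b, neg_abs_le (a - b)]
  · linarith [Int.le_ceil b, Int.ceil_lt_add_one a, le_abs_self (a - b)]

noncomputable def ceilSeries (α x : ℝ) : ℝ := ∑' N : ℕ, (⌈α * N⌉ : ℝ) * x ^ N

noncomputable def wordSeries (α x : ℝ) : ℝ := (1 - x) * ceilSeries α x

lemma summable_ceilSeries (α : ℝ) {x : ℝ} (hx : |x| < 1) :
    Summable (fun N : ℕ => (⌈α * N⌉ : ℝ) * x ^ N) := by
  have hgeom := (hasSum_add_one_mul_geometric (r := |x|) (by rwa [abs_abs])).summable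
  refine Summable.of_norm_bounded (hgeom.mul_left (|α| + 1)) fun N => ?_
  have hceil : |(⌈α * N⌉ : ℝ)| ≤ |α| * N + 1 := by
    simpa [abs_mul] using abs_ceil_sub_ceil_le (α * N) 0
  rw [norm_mul, norm_pow, Real.norm_eq_abs, Real.norm_eq_abs]
  calc |(⌈α * N⌉ : ℝ)| * |x| ^ N ≤ (|α| * N + 1) * |x| ^ N := by gcongr
    _ ≤ (|α| + 1) * ((N + 1) * |x| ^ N) := by
      have : 0 ≤ |α| * |x| ^ N := by positivity
      nlinarith [pow_nonneg (abs_nonneg x) N]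

lemma upperWord_eq (α : ℝ) (n : ℕ) : upperWord α n = ⌈α * (n + 1)⌉ - ⌈α * n⌉ := by
  have hshift : ∀ y : ℝ, ∀ m : ℤ, y = m →
      ⌈(α - ⌈α⌉ + 1) * y⌉ = ⌈α * y⌉ - (⌈α⌉ - 1) * m := by
    rintro y m rfl
    rw [← Int.ceil_sub_intCast]
    push_cast
    ring_nf
  rw [upperWord, hshift _ (n + 1) (by push_cast; ring), hshift _ n (by push_cast; ring)]
  ring

lemma upperWord_nonneg {α : ℝ} (hα : 0 ≤ α) (n : ℕ) : 0 ≤ upperWord α n := by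
  rw [upperWord_eq, sub_nonneg]
  exact Int.ceil_le_ceil (by nlinarith)

lemma hasSum_upperWord_mul_pow (α : ℝ) {x : ℝ} (hx : |x| < 1) :
    HasSum (fun n : ℕ => (upperWord α n : ℝ) * x ^ (n + 1)) (wordSeries α x) := by
  have hG : HasSum _ (ceilSeries α x) := (summable_ceilSeries α hx).hasSum
  have hshift :
      HasSum (fun n : ℕ => (⌈α * (n + 1 : ℕ)⌉ : ℝ) * x ^ (n + 1)) (ceilSeries α x) := by
    simpa using (hasSum_nat_add_iff' 1).2 hG
  have h := hshift.sub (hG.mul_left x)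
  rw [show ceilSeries α x - x * ceilSeries α x = wordSeries α x by rw [wordSeries]; ring] at h
  refine h.congr_fun fun n => ?_
  rw [upperWord_eq]
  push_cast
  ring

lemma sub_le_wordSeries_sub {α x x' : ℝ} (hα : 0 < α) (hx' : 0 ≤ x') (hx'x : x' ≤ x)
    (hx : x < 1) : x - x' ≤ wordSeries α x - wordSeries α x' := by
  have h := (hasSum_upperWord_mul_pow α (abs_lt.2 ⟨by linarith, hx⟩)).sub
    (hasSum_upperWord_mul_pow α (x := x') (abs_lt.2 ⟨by linarith, by linarith⟩))
  rw [← h.tsum_eq]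
  have hfirst : (1 : ℝ) ≤ upperWord α 0 := by
    exact_mod_cast (by simpa [upperWord_eq] using Int.one_le_ceil_iff.2 hα : 1 ≤ upperWord α 0)
  refine le_trans ?_ (h.summable.le_tsum 0 fun n _ => ?_)
  · rw [zero_add, pow_one, pow_one, ← mul_sub]
    nlinarith
  · rw [← mul_sub]
    exact mul_nonneg (by exact_mod_cast upperWord_nonneg hα.le n)
      (sub_nonneg.2 (pow_le_pow_left₀ hx' hx'x _))

lemma wordSeries_mono_left {α α' x : ℝ} (hαα' : α ≤ α') (hx0 : 0 ≤ x) (hx1 : x < 1) :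
    wordSeries α x ≤ wordSeries α' x := by
  have hx : |x| < 1 := abs_lt.2 ⟨by linarith, hx1⟩
  refine mul_le_mul_of_nonneg_left ?_ (by linarith)
  refine (summable_ceilSeries α hx).tsum_le_tsum (fun N => ?_) (summable_ceilSeries α' hx)
  gcongr

/-- The series of `α` and `α'` differ only from the index `M` on, by at most `N + 1` there. -/
lemma abs_wordSeries_sub_le {α α' x X : ℝ} {M : ℕ} (hαα' : |α - α'| ≤ 1)
    (hceil : ∀ N < M, ⌈α * N⌉ = ⌈α' * N⌉) (hx : 0 ≤ x) (hxX : x ≤ X) (hX : X < 1) :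
    |wordSeries α x - wordSeries α' x| ≤ (1 - X)⁻¹ ^ 2 * ((M + 1) * X ^ M) := by
  have hx1 : |x| < 1 := abs_lt.2 ⟨by linarith, by linarith⟩
  have hX0 : 0 ≤ X := hx.trans hxX
  set e : ℕ → ℝ := fun N => ((⌈α * N⌉ : ℝ) - ⌈α' * N⌉) * x ^ N with he_def
  have he : HasSum e (ceilSeries α x - ceilSeries α' x) :=
    ((summable_ceilSeries α hx1).hasSum.sub (summable_ceilSeries α' hx1).hasSum).congr_fun
      fun N => sub_mul _ _ _
  have htail : HasSum (fun k => e (k + M)) (ceilSeries α x - ceilSeries α' x) := by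
    have hhead : ∑ N ∈ Finset.range M, e N = 0 :=
      Finset.sum_eq_zero fun N hN => by simp [e, hceil N (Finset.mem_range.1 hN)]
    simpa [hhead] using (hasSum_nat_add_iff' M).2 he
  have hgeom := (hasSum_add_one_mul_geometric (abs_lt.2 ⟨by linarith, hX⟩)).mul_left
    ((M + 1) * X ^ M)
  have hbound : ∀ k : ℕ, ‖e (k + M)‖ ≤ (M + 1) * X ^ M * ((k + 1) * X ^ k) := by
    intro k
    have hceil_diff : |(⌈α * (k + M : ℕ)⌉ : ℝ) - ⌈α' * (k + M : ℕ)⌉| ≤ k + M + 1 := by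
      refine (abs_ceil_sub_ceil_le _ _).trans ?_
      rw [← sub_mul, abs_mul, Nat.abs_cast]
      push_cast
      nlinarith [abs_nonneg (α - α')]
    have hpow : |x| ^ (k + M) ≤ X ^ k * X ^ M := by
      rw [← pow_add, abs_of_nonneg hx]; exact pow_le_pow_left₀ hx hxX _
    rw [Real.norm_eq_abs, he_def, abs_mul, abs_pow]
    calc _ ≤ ((k : ℝ) + M + 1) * (X ^ k * X ^ M) := by gcongr
      _ ≤ (M + 1) * X ^ M * ((k + 1) * X ^ k) := by
        have : 0 ≤ X ^ k * X ^ M := by positivity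
        nlinarith [mul_nonneg (mul_nonneg (Nat.cast_nonneg k) (Nat.cast_nonneg M)) this]
  have hceilSeries := htail.norm_le_of_bounded hgeom hbound
  rw [Real.norm_eq_abs] at hceilSeries
  calc |wordSeries α x - wordSeries α' x| = (1 - x) * |ceilSeries α x - ceilSeries α' x| := by
        rw [wordSeries, wordSeries, ← mul_sub, abs_mul, abs_of_nonneg (by linarith)]
    _ ≤ |ceilSeries α x - ceilSeries α' x| := by
        nlinarith [abs_nonneg (ceilSeries α x - ceilSeries α' x)]
    _ ≤ (1 - X)⁻¹ ^ 2 * ((M + 1) * X ^ M) := by linarith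

lemma le_of_wordSeries_eq_one {α α' x x' : ℝ} (hα : 0 < α) (hαα' : α ≤ α') (hx : 0 ≤ x)
    (hx' : x' < 1) (h : wordSeries α x = 1) (h' : wordSeries α' x' = 1) : x' ≤ x := by
  by_contra! hxx'
  have hincr := sub_le_wordSeries_sub (hα.trans_le hαα') hx hxx'.le hx'
  have hmono := wordSeries_mono_left hαα' hx (hxx'.trans hx')
  linarith

lemma abs_sub_le_of_wordSeries_eq_one {α α' x x' X : ℝ} {M : ℕ} (hα : 0 < α) (hα' : 0 < α')
    (hαα' : |α - α'| ≤ 1) (hceil : ∀ N < M, ⌈α * N⌉ = ⌈α' * N⌉)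
    (hx : 0 ≤ x) (hx' : 0 ≤ x') (hxX : x ≤ X) (hx'X : x' ≤ X) (hX : X < 1)
    (h : wordSeries α x = 1) (h' : wordSeries α' x' = 1) :
    |x - x'| ≤ (1 - X)⁻¹ ^ 2 * ((M + 1) * X ^ M) := by
  wlog hx'x : x' ≤ x generalizing α α' x x'
  · rw [abs_sub_comm]
    exact this hα' hα (by rwa [abs_sub_comm]) (fun N hN => (hceil N hN).symm) hx' hx hx'X hxX
      h' h (by linarith)
  have hincr := sub_le_wordSeries_sub hα' hx' hx'x (hxX.trans_lt hX)
  have hclose := abs_wordSeries_sub_le hαα' hceil hx hxX hX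
  rw [abs_of_nonneg (by linarith)]
  rw [h', ← h] at hincr
  linarith [neg_abs_le (wordSeries α x - wordSeries α' x)]

lemma ceil_eq_ceil_of_abs_sub_lt_distNearestInt {a y : ℝ} (h : |a - y| < distNearestInt y) :
    ⌈a⌉ = ⌈y⌉ := by
  have hup := round_le y ⌈y⌉
  have hdown := round_le y (⌈y⌉ - 1)
  have hle := Int.le_ceil y
  have hlt := Int.ceil_lt_add_one y
  push_cast at hdown
  rw [abs_of_nonpos (a := y - ⌈y⌉) (by linarith)] at hup
  rw [abs_of_nonneg (a := y - (⌈y⌉ - 1)) (by linarith)] at hdown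
  rw [distNearestInt] at h
  rw [Int.ceil_eq_iff]
  constructor <;> linarith [abs_lt.1 h]

lemma ceil_mul_eq_of_abs_sub_le {α₀ a l c : ℝ} {M : ℕ} (hl : 1 ≤ l)
    (hdio : ∀ q : ℕ, 0 < q → c * q / l ^ q < distNearestInt (q * α₀))
    (ha : |a - α₀| ≤ c / l ^ M) : ∀ N ≤ M, ⌈a * N⌉ = ⌈α₀ * N⌉ := by
  intro N hN
  rcases N.eq_zero_or_pos with rfl | hN0
  · simp
  have hc : 0 ≤ c := by
    simpa using (le_div_iff₀ (pow_pos (by linarith) M)).1 ((abs_nonneg _).trans ha)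
  apply ceil_eq_ceil_of_abs_sub_lt_distNearestInt
  calc |a * N - α₀ * N| = N * |a - α₀| := by
        rw [← sub_mul, abs_mul, Nat.abs_cast, mul_comm]
    _ ≤ N * (c / l ^ N) := by
        gcongr
        exact ha.trans (div_le_div_of_nonneg_left hc (by positivity) (pow_le_pow_right₀ hl hN))
    _ < distNearestInt (α₀ * N) := by
        rw [mul_comm α₀, mul_div_assoc', mul_comm (N : ℝ) c]
        exact hdio N hN0

lemma exists_pos_forall_lt_of_eventually_lt {w : ℕ → ℝ} {c : ℝ} (hc : 0 < c)
    (hw : ∀ q, 0 < q → 0 < w q) (hev : ∀ᶠ q in atTop, c < w q) :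
    ∃ c' > 0, ∀ q, 0 < q → c' < w q := by
  obtain ⟨Q, hQ⟩ := eventually_atTop.1 hev
  set m := (Finset.Icc 1 Q.succ).inf' ⟨1, by simp⟩ w
  have hm : 0 < m := (Finset.lt_inf'_iff _).2 fun q hq => hw q (Finset.mem_Icc.1 hq).1
  refine ⟨min c m / 2, by positivity, fun q hq => ?_⟩
  have hhalf : min c m / 2 < min c m := half_lt_self (lt_min hc hm)
  rcases le_or_gt q Q.succ with hqQ | hqQ
  · exact hhalf.trans_le
      ((min_le_right _ _).trans (Finset.inf'_le w (Finset.mem_Icc.2 ⟨hq, hqQ⟩)))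
  · exact hhalf.trans ((min_le_left _ _).trans_lt (hQ q (by omega)))

lemma exists_pos_eventually_lt_of_irrationalityBase_lt {α l : ℝ} (hl : 1 ≤ l)
    (hθ : irrationalityBase α < ENNReal.ofReal l) :
    ∃ c > 0, ∀ᶠ q : ℕ in atTop, c < l ^ q * distNearestInt (q * α) / q := by
  set v : ℕ → EReal := fun q => ((l ^ q * distNearestInt (q * α) / q : ℝ) : EReal)
  have hne : liminf v atTop ≠ 0 := fun h =>
    hθ.not_ge (le_sSup ⟨l, ⟨hl, h⟩, rfl⟩)
  have hnonneg : 0 ≤ liminf v atTop :=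
    le_liminf_of_le (by isBoundedDefault) (Eventually.of_forall fun q =>
      EReal.coe_nonneg.2 (by unfold distNearestInt; positivity))
  obtain ⟨c, hc0, hc⟩ := EReal.exists_between_coe_real (hnonneg.lt_of_ne hne.symm)
  exact ⟨c, by exact_mod_cast hc0,
    (eventually_lt_of_lt_liminf hc).mono fun q hq => EReal.coe_lt_coe_iff.1 hq⟩

lemma exists_lt_distNearestInt_of_irrationalityBase_lt {α l : ℝ} (hirr : Irrational α)
    (hl : 1 ≤ l) (hθ : irrationalityBase α < ENNReal.ofReal l) :
    ∃ c > 0, ∀ q : ℕ, 0 < q → c * q / l ^ q < distNearestInt (q * α) := by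
  obtain ⟨c, hc, hev⟩ := exists_pos_eventually_lt_of_irrationalityBase_lt hl hθ
  have hpos : ∀ q : ℕ, 0 < q → 0 < l ^ q * distNearestInt (q * α) / q := fun q hq => by
    have hdist : 0 < distNearestInt (q * α) :=
      abs_pos.2 (sub_ne_zero.2 ((hirr.natCast_mul hq.ne').ne_int _))
    positivity
  obtain ⟨c', hc', hlt⟩ := exists_pos_forall_lt_of_eventually_lt hc hpos hev
  refine ⟨c', hc', fun q hq => ?_⟩
  have := hlt q hq
  rw [lt_div_iff₀ (by positivity)] at this
  rwa [div_lt_iff₀ (by positivity), mul_comm (distNearestInt _)]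

lemma tendsto_add_one_mul_pow_atTop_nhds_zero {r : ℝ} (hr0 : 0 ≤ r) (hr1 : r < 1) :
    Tendsto (fun M : ℕ => ((M : ℝ) + 1) * r ^ M) atTop (𝓝 0) :=
  (hasSum_add_one_mul_geometric (abs_lt.2 ⟨by linarith, hr1⟩)).summable.tendsto_atTop_zero

section GeometricModulus

variable {f : ℝ → ℝ} {α₀ l c K X : ℝ}

lemma continuousAt_of_abs_sub_le_geometric (hl : 0 < l) (hc : 0 < c) (hX0 : 0 ≤ X)
    (hX1 : X < 1)
    (hf : ∀ᶠ a in 𝓝 α₀, ∀ M : ℕ, |a - α₀| ≤ c / l ^ M → |f a - f α₀| ≤ K * ((M + 1) * X ^ M)) :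
    ContinuousAt f α₀ := by
  refine Metric.tendsto_nhds.2 fun ε hε => ?_
  have hlim := (tendsto_add_one_mul_pow_atTop_nhds_zero hX0 hX1).const_mul K
  rw [mul_zero] at hlim
  obtain ⟨M, hM⟩ := (hlim.eventually_lt_const hε).exists
  filter_upwards [hf, Metric.closedBall_mem_nhds α₀ (div_pos hc (pow_pos hl M))] with a ha hball
  exact (ha M hball).trans_lt hM

/-- Choosing `M` with `c / l ^ (M + 1) < |a - α₀| ≤ c / l ^ M` turns the bound into
`|f a - f α₀| ≤ (K l / c) (M + 1) (X l) ^ M · |a - α₀|`. -/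
lemma hasDerivAt_zero_of_abs_sub_le_geometric (hl : 1 < l) (hc : 0 < c) (hX0 : 0 ≤ X)
    (hXl : X * l < 1)
    (hf : ∀ᶠ a in 𝓝 α₀, ∀ M : ℕ, |a - α₀| ≤ c / l ^ M → |f a - f α₀| ≤ K * ((M + 1) * X ^ M)) :
    HasDerivAt f 0 α₀ := by
  have hl0 : 0 < l := by linarith
  rw [hasDerivAt_iff_isLittleO, Asymptotics.isLittleO_iff]
  intro ε hε
  have hlim := (tendsto_add_one_mul_pow_atTop_nhds_zero (by positivity) hXl).const_mul (K * l / c)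
  rw [mul_zero] at hlim
  obtain ⟨M₁, hM₁⟩ := eventually_atTop.1 (hlim.eventually_le_const hε)
  filter_upwards [hf, Metric.ball_mem_nhds α₀ (div_pos hc (pow_pos hl0 M₁))] with a ha hball
  rw [smul_zero, sub_zero, Real.norm_eq_abs, Real.norm_eq_abs]
  rcases eq_or_ne a α₀ with rfl | hne
  · simp
  have hd : 0 < |a - α₀| := abs_pos.2 (sub_ne_zero.2 hne)
  rw [Metric.mem_ball, Real.dist_eq, lt_div_iff₀ (pow_pos hl0 _), ← lt_div_iff₀' hd] at hball
  obtain ⟨M, hM, hM'⟩ := exists_nat_pow_near ((one_le_pow₀ hl.le).trans hball.le) hl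
  have hM₁M : M₁ ≤ M := by
    have := hball.trans hM'
    rw [pow_lt_pow_iff_right₀ hl] at this
    omega
  rw [le_div_iff₀ hd, ← le_div_iff₀' (pow_pos hl0 M)] at hM
  rw [div_lt_iff₀ hd, ← div_lt_iff₀' (pow_pos hl0 _)] at hM'
  calc |f a - f α₀| ≤ K * ((M + 1) * X ^ M) := ha M hM
    _ = K * l / c * ((M + 1) * (X * l) ^ M) * (c / l ^ (M + 1)) := by
        field_simp
        ring
    _ ≤ ε * |a - α₀| := mul_le_mul (hM₁ M hM₁M) hM'.le (by positivity) hε.le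

end GeometricModulus

namespace IsDevilStaircase

variable {Δ : ℝ → ℝ} {α α' α₀ l c X : ℝ}

lemma inv_pos_lt_one (hΔ : IsDevilStaircase Δ) (hα : 0 < α) : 0 < (Δ α)⁻¹ ∧ (Δ α)⁻¹ < 1 :=
  ⟨inv_pos.2 (by linarith [(hΔ.2 α hα).1.1]), inv_lt_one_of_one_lt₀ (hΔ.2 α hα).1.1⟩

lemma wordSeries_inv (hΔ : IsDevilStaircase Δ) (hα : 0 < α) : wordSeries α (Δ α)⁻¹ = 1 := by
  obtain ⟨hx0, hx1⟩ := hΔ.inv_pos_lt_one hα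
  rw [← (hasSum_upperWord_mul_pow α (abs_lt.2 ⟨by linarith, hx1⟩)).tsum_eq, ← (hΔ.2 α hα).1.2]
  simp only [inv_pow, div_eq_mul_inv]

lemma inv_le_inv_of_le (hΔ : IsDevilStaircase Δ) (hα : 0 < α) (hαα' : α ≤ α') :
    (Δ α')⁻¹ ≤ (Δ α)⁻¹ :=
  le_of_wordSeries_eq_one hα hαα' (hΔ.inv_pos_lt_one hα).1.le
    (hΔ.inv_pos_lt_one (hα.trans_le hαα')).2 (hΔ.wordSeries_inv hα)
    (hΔ.wordSeries_inv (hα.trans_le hαα'))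

lemma eventually_abs_inv_sub_le (hΔ : IsDevilStaircase Δ) (h0 : 0 < α₀) (hl : 1 ≤ l)
    (hdio : ∀ q : ℕ, 0 < q → c * q / l ^ q < distNearestInt (q * α₀)) (hX : X < 1)
    (hxX : ∀ᶠ a in 𝓝 α₀, (Δ a)⁻¹ ≤ X) :
    ∀ᶠ a in 𝓝 α₀, ∀ M : ℕ, |a - α₀| ≤ c / l ^ M →
      |(Δ a)⁻¹ - (Δ α₀)⁻¹| ≤ (1 - X)⁻¹ ^ 2 * ((M + 1) * X ^ M) := by
  filter_upwards [hxX, lt_mem_nhds h0, Metric.closedBall_mem_nhds α₀ one_pos]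
    with a hax ha0 ha1 M hM
  exact abs_sub_le_of_wordSeries_eq_one ha0 h0 ha1
    (fun N hN => ceil_mul_eq_of_abs_sub_le hl hdio hM N hN.le)
    (hΔ.inv_pos_lt_one ha0).1.le (hΔ.inv_pos_lt_one h0).1.le hax hxX.self_of_nhds hX
    (hΔ.wordSeries_inv ha0) (hΔ.wordSeries_inv h0)

lemma continuousAt_inv (hΔ : IsDevilStaircase Δ) (h0 : 0 < α₀) (hl : 1 ≤ l) (hc : 0 < c)
    (hdio : ∀ q : ℕ, 0 < q → c * q / l ^ q < distNearestInt (q * α₀)) :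
    ContinuousAt Δ⁻¹ α₀ := by
  obtain ⟨hX0, hX1⟩ := hΔ.inv_pos_lt_one (half_pos h0)
  have hxX : ∀ᶠ a in 𝓝 α₀, (Δ a)⁻¹ ≤ (Δ (α₀ / 2))⁻¹ :=
    (lt_mem_nhds (half_lt_self h0)).mono fun a ha =>
      hΔ.inv_le_inv_of_le (half_pos h0) ha.le
  exact continuousAt_of_abs_sub_le_geometric (by linarith) hc hX0.le hX1
    (hΔ.eventually_abs_inv_sub_le h0 hl hdio hX1 hxX)

lemma hasDerivAt_inv (hΔ : IsDevilStaircase Δ) (h0 : 0 < α₀) (hl : 1 < l) (hlΔ : l < Δ α₀)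
    (hc : 0 < c) (hdio : ∀ q : ℕ, 0 < q → c * q / l ^ q < distNearestInt (q * α₀)) :
    HasDerivAt Δ⁻¹ 0 α₀ := by
  have hl0 : 0 < l := by linarith
  obtain ⟨X, hx₀X, hXl⟩ := exists_between (inv_strictAnti₀ hl0 hlΔ)
  have hxX : ∀ᶠ a in 𝓝 α₀, (Δ a)⁻¹ ≤ X :=
    ((hΔ.continuousAt_inv h0 hl.le hc hdio).eventually_lt_const hx₀X).mono fun _ h => h.le
  exact hasDerivAt_zero_of_abs_sub_le_geometric hl hc
    ((hΔ.inv_pos_lt_one h0).1.trans hx₀X).le ((lt_div_iff₀ hl0).1 (by rwa [one_div]))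
    (hΔ.eventually_abs_inv_sub_le h0 hl.le hdio (hXl.trans (inv_lt_one_of_one_lt₀ hl)) hxX)

end IsDevilStaircase

/-- If `α₀ > 0` is irrational and `θ(α₀) < Δ(α₀)`, then `Δ′(α₀) = 0`. -/
theorem devilStaircase_deriv_zero (Δ : ℝ → ℝ) (hΔ : IsDevilStaircase Δ)
    (α₀ : ℝ) (h0 : 0 < α₀) (hirr : Irrational α₀)
    (hθ : irrationalityBase α₀ < ENNReal.ofReal (Δ α₀)) :
    HasDerivAt Δ 0 α₀ := by
  have hΔ₁ : 1 < Δ α₀ := (hΔ.2 α₀ h0).1.1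
  obtain ⟨l, hl₁, hlΔ, hθl⟩ :
      ∃ l, 1 < l ∧ l < Δ α₀ ∧ irrationalityBase α₀ < ENNReal.ofReal l := by
    obtain ⟨l, -, hθl, hlΔ⟩ := ENNReal.lt_iff_exists_real_btwn.1 hθ
    refine ⟨max l ((1 + Δ α₀) / 2), lt_max_of_lt_right (by linarith),
      max_lt ((ENNReal.ofReal_lt_ofReal_iff (by linarith)).1 hlΔ) (by linarith),
      hθl.trans_le (ENNReal.ofReal_le_ofReal (le_max_left _ _))⟩
  obtain ⟨c, hc, hdio⟩ := exists_lt_distNearestInt_of_irrationalityBase_lt hirr hl₁.le hθl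
  simpa using (hΔ.hasDerivAt_inv h0 hl₁ hlΔ hc hdio).inv (inv_pos.2 (by linarith)).ne'
end
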